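/- Let S₃ = ⟨r, π | r³ = π² = 1, πr = r²π⟩ act on a group R, and form the semidirect product R ⋊ S₃ with multiplication (t, α)·(t′, β) = (t · ᵅt′, αβ). Suppose elements ζ, τ generate a group Γ ≅ ℤ/6 ⋊ ℤ/2 with relations ζ⁶ = 1, τ² = 1, τζ = ζ⁵τ. Given t ∈ R with ζ·t·ζ⁻¹ = r⁻¹ t⁻¹ r (in an ambient group containing R, Γ, S₃ with appropriate commutation), π τ = τ π, and t commuting with πτ, define φ(ζ) = t r ζ and φ(τ) = π τ. Then φ(ζ)⁶ = 1, φ(τ)² = 1, and φ(τ)φ(ζ) = φ(ζ)⁵ φ(τ), so φ extends to a group homomorphism Γ → the ambient group. -/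
import Mathlib

/-- the descent-datum verification.  In an ambient group
containing elements `r, π` (satisfying the `S₃` relations), `ζ, τ` (satisfying
the `ℤ/6 ⋊ ℤ/2` relations), commuting suitably with each other, and `t` with
`ζ t ζ⁻¹ = r⁻¹ t⁻¹ r` and `t` commuting with `π τ`, the assignments
`φ(ζ) = t r ζ`, `φ(τ) = π τ` satisfy the relations `φ(ζ)⁶ = 1`, `φ(τ)² = 1`,
`φ(τ) φ(ζ) = φ(ζ)⁵ φ(τ)`, hence define a homomorphism `ℤ/6 ⋊ ℤ/2 → G`. -/
theorem descent_datum_relations (G : Type*) [Group G] (r π ζ τ t : G)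
    (hr3 : r ^ 3 = 1) (hπ2 : π ^ 2 = 1) (hπr : π * r = r ^ 2 * π)
    (hζ6 : ζ ^ 6 = 1) (hτ2 : τ ^ 2 = 1) (hτζ : τ * ζ = ζ ^ 5 * τ)
    (hζr : ζ * r = r * ζ) (hζπ : ζ * π = π * ζ)
    (hτr : τ * r = r * τ) (hτπ : τ * π = π * τ)
    (hζt : ζ * t * ζ⁻¹ = r⁻¹ * t⁻¹ * r)
    (htπτ : t * (π * τ) = (π * τ) * t) :
    (t * r * ζ) ^ 6 = 1 ∧ (π * τ) ^ 2 = 1 ∧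
      (π * τ) * (t * r * ζ) = (t * r * ζ) ^ 5 * (π * τ) := by
  have hr3' : r * (r * r) = 1 := by rw [← hr3]; simp only [pow_succ, pow_zero, one_mul, mul_assoc]
  have h6e : ζ * (ζ * (ζ * (ζ * (ζ * ζ)))) = 1 := by
    rw [← hζ6]; simp only [pow_succ, pow_zero, one_mul, mul_assoc]
  have hrinv : r⁻¹ = r * r := by
    symm; exact eq_inv_of_mul_eq_one_right (by simpa [mul_assoc] using hr3')
  -- base relations in associated form
  have h1e : ζ * t = r * (r * (t⁻¹ * (r * ζ))) := by
    have h : ζ * t = (ζ * t * ζ⁻¹) * ζ := by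
      simp only [mul_assoc, inv_mul_cancel, mul_one]
    rw [h, hζt, hrinv]; simp only [mul_assoc]
  have h2e : ζ * t⁻¹ = r * (r * (t * (r * ζ))) := by
    have hi : ζ * (t⁻¹ * ζ⁻¹) = r⁻¹ * (t * r) := by
      have h := congrArg Inv.inv hζt
      simpa [mul_inv_rev, inv_inv, mul_assoc] using h
    calc ζ * t⁻¹ = ζ * (t⁻¹ * ζ⁻¹) * ζ := by
          simp only [mul_assoc, inv_mul_cancel, mul_one]
      _ = r⁻¹ * (t * r) * ζ := by rw [hi]
      _ = r * (r * (t * (r * ζ))) := by rw [hrinv]; simp only [mul_assoc]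
  -- directed rewrite rules (cons forms and end forms)
  have R1 : ∀ x : G, ζ * (t * x) = r * (r * (t⁻¹ * (r * (ζ * x)))) := fun x => by
    rw [← mul_assoc, h1e]; simp only [mul_assoc]
  have R2 : ∀ x : G, ζ * (t⁻¹ * x) = r * (r * (t * (r * (ζ * x)))) := fun x => by
    rw [← mul_assoc, h2e]; simp only [mul_assoc]
  have R3 : ∀ x : G, ζ * (r * x) = r * (ζ * x) := fun x => by
    rw [← mul_assoc, hζr, mul_assoc]
  have R4 : ∀ x : G, r * (r * (r * x)) = x := fun x => by
    rw [← mul_assoc, ← mul_assoc, mul_assoc r r r, hr3', one_mul]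
  have R5 : ∀ x : G, ζ * (ζ * (ζ * (ζ * (ζ * (ζ * x))))) = x := fun x => by
    calc ζ * (ζ * (ζ * (ζ * (ζ * (ζ * x)))))
        = (ζ * (ζ * (ζ * (ζ * (ζ * ζ))))) * x := by simp only [mul_assoc]
      _ = x := by rw [h6e, one_mul]
  have R6 : ∀ x : G, π * (r * x) = r * (r * (π * x)) := fun x => by
    rw [← mul_assoc, hπr]; simp only [pow_two, mul_assoc]
  have R6e : π * r = r * (r * π) := by rw [hπr]; simp only [pow_two, mul_assoc]
  have R7 : ∀ x : G, τ * (r * x) = r * (τ * x) := fun x => by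
    rw [← mul_assoc, hτr, mul_assoc]
  have R7e : τ * r = r * τ := hτr
  have R8 : ∀ x : G, τ * (ζ * x) = ζ * (ζ * (ζ * (ζ * (ζ * (τ * x))))) := fun x => by
    rw [← mul_assoc, hτζ]; simp only [pow_succ, pow_zero, one_mul, mul_assoc]
  have R8e : τ * ζ = ζ * (ζ * (ζ * (ζ * (ζ * τ)))) := by
    rw [hτζ]; simp only [pow_succ, pow_zero, one_mul, mul_assoc]
  have R9 : ∀ x : G, π * (ζ * x) = ζ * (π * x) := fun x => by
    rw [← mul_assoc, ← hζπ, mul_assoc]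
  have R9e : π * ζ = ζ * π := hζπ.symm
  have R3e : ζ * r = r * ζ := hζr
  have R10 : ∀ x : G, π * (τ * (t * x)) = t * (π * (τ * x)) := fun x => by
    calc π * (τ * (t * x)) = ((π * τ) * t) * x := by simp only [mul_assoc]
      _ = (t * (π * τ)) * x := by rw [← htπτ]
      _ = t * (π * (τ * x)) := by simp only [mul_assoc]
  have Rπ : ∀ x : G, π * (π * x) = x := fun x => by
    rw [← mul_assoc, ← pow_two, hπ2, one_mul]
  refine ⟨?_, ?_, ?_⟩
  · calc (t * r * ζ) ^ 6
        = t * (r * (ζ * (t * (r * (ζ * (t * (r * (ζ * (t * (r * (ζ *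
            (t * (r * (ζ * (t * (r * ζ)))))))))))))))) := by
          simp only [pow_succ, pow_zero, one_mul, mul_assoc]
      _ = 1 := by
          simp only [R1, R2, R3, R3e, R4, R5, mul_inv_cancel_left, inv_mul_cancel_left,
            mul_inv_cancel, inv_mul_cancel, mul_one, hr3', h6e]
  · calc (π * τ) ^ 2 = π * (τ * (π * τ)) := by simp only [pow_succ, pow_zero, one_mul, mul_assoc]
      _ = π * (π * (τ * τ)) := by rw [← mul_assoc τ π τ, hτπ, mul_assoc]
      _ = 1 := by rw [Rπ, ← pow_two, hτ2]
  · have lhs : (π * τ) * (t * r * ζ) = t * (r * (r * (ζ * (ζ * (ζ * (ζ * (ζ * (π * τ)))))))) := by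
      calc (π * τ) * (t * r * ζ) = π * (τ * (t * (r * ζ))) := by simp only [mul_assoc]
        _ = _ := by simp only [R10, R6, R6e, R7, R7e, R8, R8e, R9, R9e, R3, R3e]
    have rhs : (t * r * ζ) ^ 5 * (π * τ)
        = t * (r * (r * (ζ * (ζ * (ζ * (ζ * (ζ * (π * τ)))))))) := by
      calc (t * r * ζ) ^ 5 * (π * τ)
          = t * (r * (ζ * (t * (r * (ζ * (t * (r * (ζ * (t * (r * (ζ *
              (t * (r * (ζ * (π * τ))))))))))))))) := by
            simp only [pow_succ, pow_zero, one_mul, mul_assoc]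
        _ = _ := by
            simp only [R1, R2, R3, R3e, R4, R5, mul_inv_cancel_left, inv_mul_cancel_left,
              mul_inv_cancel, inv_mul_cancel, mul_one, hr3', h6e]
    rw [lhs, rhs]
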